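/- Let m, n ≥ 1 be positive integers and R = R_1 × ⋯ × R_m × F_1 × ⋯ × F_n, where each R_i is a commutative Artinian local principal ideal ring that is not a field with exactly n_i non-trivial ideals, and each F_j is a field. Then the strong metric dimension of G(R) equals (∏_{i=1}^m (n_i + 2))·2^n − 2^{m+n-1} − 2; that is, the minimum cardinality of a strong resolving set of G(R) is (∏_{i=1}^m (n_i + 2))·2^n − 2^{m+n-1} − 2. -/

import Mathlib

open SimpleGraph

/-- The type of non-trivial ideals of a commutative ring `R`
(ideals `I` with `I ≠ 0` and `I ≠ R`). -/
abbrev NontrivialIdeal (R : Type*) [CommRing R] : Type _ :=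
  {I : Ideal R // I ≠ ⊥ ∧ I ≠ ⊤}

/-- The intersection graph of ideals of `R`: vertices are the non-trivial ideals,
and distinct vertices are adjacent iff their intersection is non-zero. -/
def intersectionGraph (R : Type*) [CommRing R] : SimpleGraph (NontrivialIdeal R) where
  Adj I J := I ≠ J ∧ I.1 ⊓ J.1 ≠ ⊥
  symm := ⟨fun I J h => ⟨h.1.symm, by rw [inf_comm]; exact h.2⟩⟩
  loopless := ⟨fun I h => h.1 rfl⟩

/-- Two distinct vertices `u, v` are mutually maximally distant if
`d(v,w) ≤ d(u,v)` for every neighbour `w` of `u` and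
`d(u,w) ≤ d(u,v)` for every neighbour `w` of `v`. -/
def MutuallyMaximallyDistant {V : Type*} (G : SimpleGraph V) (u v : V) : Prop :=
  u ≠ v ∧ (∀ w, G.Adj u w → G.edist v w ≤ G.edist u v) ∧
    (∀ w, G.Adj v w → G.edist u w ≤ G.edist u v)

theorem MutuallyMaximallyDistant.symm {V : Type*} {G : SimpleGraph V} {u v : V}
    (h : MutuallyMaximallyDistant G u v) : MutuallyMaximallyDistant G v u :=
  ⟨h.1.symm,
    fun w hw => by rw [show G.edist v u = G.edist u v from G.edist_comm]; exact h.2.2 w hw,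
    fun w hw => by rw [show G.edist v u = G.edist u v from G.edist_comm]; exact h.2.1 w hw⟩

/-- The strong resolving graph of `G`: `u` and `v` are adjacent iff they are
mutually maximally distant. -/
def strongResolvingGraph {V : Type*} (G : SimpleGraph V) : SimpleGraph V where
  Adj := MutuallyMaximallyDistant G
  symm := ⟨fun _ _ h => h.symm⟩
  loopless := ⟨fun _ h => h.1 rfl⟩

/-- A vertex `w` strongly resolves `u` and `v` if `d(w,u) = d(w,v) + d(v,u)` or
`d(w,v) = d(w,u) + d(u,v)`. A set `W` is a strong resolving set if every two distinct
vertices are strongly resolved by some member of `W`. -/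
def IsStrongResolvingSet {V : Type*} (G : SimpleGraph V) (W : Set V) : Prop :=
  ∀ u v : V, u ≠ v → ∃ w ∈ W,
    G.edist w u = G.edist w v + G.edist v u ∨ G.edist w v = G.edist w u + G.edist u v

/-- The product ideal which is `Rᵢ` in the components where `I` is zero and `0` elsewhere. -/
def complIdeal {ι : Type*} (F : ι → Type*) [∀ i, CommRing (F i)] (I : Ideal (∀ i, F i)) :
    Ideal (∀ i, F i) where
  carrier := {x | ∀ i, I.map (Pi.evalRingHom F i) ≠ ⊥ → x i = 0}
  zero_mem' := fun i _ => rfl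
  add_mem' := fun hx hy i hi => by
    simp only [Pi.add_apply, hx i hi, hy i hi, add_zero]
  smul_mem' := fun c x hx i hi => by
    simp only [Pi.smul_apply, smul_eq_mul, Pi.mul_apply, hx i hi, mul_zero]


/-!
Ideals of a finite product are tuples of ideals, and the ideals of each factor form a chain
(a local Bézout ring is a chain ring). Hence two nontrivial ideals of `R` meet iff their supports
`{k | Iₖ ≠ 0}` meet, and every nonempty subset of the `m + n` indices is a support. The ideal of
full support is adjacent to everything, so `G(R)` has diameter at most two, and in such a graph
a vertex `w ∉ {u, v}` strongly resolves `u, v` exactly when `u ~ v` and `w` is adjacent to only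
one of them. So the vertices outside a strong resolving set have distinct, pairwise intersecting
supports: at most `2 ^ (m + n - 1)` of them. Conversely, one vertex for each member of an
intersecting family of that size may be left out; two of them are resolved by a vertex with
singleton support.
-/

namespace SimpleGraph

variable {V : Type*} {G : SimpleGraph V} {u v w : V}

lemma edist_le_two_of_forall_adj (c : V) (hc : ∀ x, x ≠ c → G.Adj c x) (u v : V) :
    G.edist u v ≤ 2 := by
  have hle : ∀ x, G.edist c x ≤ 1 := fun x => by
    rcases eq_or_ne x c with rfl | hx
    · simp
    · exact (edist_eq_one_iff_adj.mpr (hc x hx)).le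
  calc G.edist u v ≤ G.edist u c + G.edist c v := G.edist_triangle
    _ ≤ 1 + 1 := add_le_add (edist_comm ▸ hle u) (hle v)
    _ = 2 := one_add_one_eq_two

lemma edist_eq_two_of_adj_of_adj (huv : G.Adj u v) (hvw : G.Adj v w) (huw : ¬G.Adj u w)
    (hne : u ≠ w) : G.edist u w = 2 :=
  edist_eq_two_iff.mpr ⟨hne, huw, v, (mem_commonNeighbors G).mpr ⟨huv, hvw.symm⟩⟩

lemma adj_of_edist_eq_add (h2 : G.edist u w ≤ 2) (huv : u ≠ v) (hvw : v ≠ w)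
    (h : G.edist u w = G.edist u v + G.edist v w) :
    G.Adj u v ∧ G.Adj v w ∧ ¬G.Adj u w := by
  have h1 : 1 ≤ G.edist u v := Order.one_le_iff_pos.mpr (edist_pos_of_ne huv)
  have h1' : 1 ≤ G.edist v w := Order.one_le_iff_pos.mpr (edist_pos_of_ne hvw)
  rw [h] at h2
  have huv1 : G.edist u v = 1 ∧ G.edist v w = 1 := by
    generalize G.edist u v = a at *
    generalize G.edist v w = b at *
    lift a to ℕ using ne_top_of_le_ne_top (by decide) (le_self_add.trans h2)
    lift b to ℕ using ne_top_of_le_ne_top (by decide) (le_add_self.trans h2)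
    norm_cast at *
    omega
  refine ⟨edist_eq_one_iff_adj.mp huv1.1, edist_eq_one_iff_adj.mp huv1.2, fun hadj => ?_⟩
  rw [edist_eq_one_iff_adj.mpr hadj, huv1.1, huv1.2] at h
  exact absurd h (by decide)

theorem _root_.isStrongResolvingSet_iff_of_edist_le_two (h2 : ∀ x y, G.edist x y ≤ 2)
    {W : Set V} :
    IsStrongResolvingSet G W ↔
      ∀ u ∉ W, ∀ v ∉ W, u ≠ v →
        G.Adj u v ∧ ∃ w ∈ W, ¬(G.Adj w u ↔ G.Adj w v) := by
  constructor
  · intro hW u hu v hv huv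
    obtain ⟨w, hw, h | h⟩ := hW u v huv
    · obtain ⟨hwv, hvu, hwu⟩ := adj_of_edist_eq_add (h2 w u) (ne_of_mem_of_not_mem hw hv)
        huv.symm h
      exact ⟨hvu.symm, w, hw, by tauto⟩
    · obtain ⟨hwu, huv, hwv⟩ :=
        adj_of_edist_eq_add (h2 w v) (ne_of_mem_of_not_mem hw hu) huv h
      exact ⟨huv, w, hw, by tauto⟩
  · intro hW u v huv
    by_cases hu : u ∈ W
    · exact ⟨u, hu, Or.inr (by rw [edist_self, zero_add])⟩
    by_cases hv : v ∈ W
    · exact ⟨v, hv, Or.inl (by rw [edist_self, zero_add])⟩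
    obtain ⟨hadj, w, hw, hdiff⟩ := hW u hu v hv huv
    have hwu : w ≠ u := ne_of_mem_of_not_mem hw hu
    have hwv : w ≠ v := ne_of_mem_of_not_mem hw hv
    refine ⟨w, hw, ?_⟩
    by_cases hwu' : G.Adj w u
    · have hwv' : ¬G.Adj w v := by tauto
      right
      rw [edist_eq_two_of_adj_of_adj hwu' hadj hwv' hwv, edist_eq_one_iff_adj.mpr hwu',
        edist_eq_one_iff_adj.mpr hadj, one_add_one_eq_two]
    · have hwv' : G.Adj w v := by tauto
      left
      rw [edist_eq_two_of_adj_of_adj hwv' hadj.symm hwu' hwu, edist_eq_one_iff_adj.mpr hwv',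
        edist_eq_one_iff_adj.mpr hadj.symm, one_add_one_eq_two]

end SimpleGraph

section Intersecting

variable {ι : Type*} [Fintype ι] [DecidableEq ι]

lemma Set.Intersecting.ncard_le_two_pow {s : Set (Finset ι)} (hs : s.Intersecting) :
    s.ncard ≤ 2 ^ (Fintype.card ι - 1) := by
  classical
  have h := Set.Intersecting.card_le (s := s.toFinset) (by rwa [Set.coe_toFinset])
  rw [Fintype.card_finset, ← Set.ncard_eq_toFinset_card'] at h
  rcases eq_or_ne (Fintype.card ι) 0 with h0 | h0
  · rw [h0, pow_zero] at h
    exact (show s.ncard = 0 by omega) ▸ Nat.zero_le _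
  · rw [← mul_pow_sub_one h0] at h
    exact Nat.le_of_mul_le_mul_left h two_pos

lemma Set.exists_intersecting_ncard_eq_two_pow [Nonempty ι] :
    ∃ s : Set (Finset ι), s.Intersecting ∧ s.ncard = 2 ^ (Fintype.card ι - 1) := by
  obtain ⟨t, -, ht, hti⟩ :=
    Set.Intersecting.exists_card_eq (s := (∅ : Finset (Finset ι)))
      (by simp [Set.intersecting_empty])
  refine ⟨t, hti, ?_⟩
  rw [Set.ncard_coe_finset]
  rw [Fintype.card_finset, ← mul_pow_sub_one Fintype.card_ne_zero] at ht
  exact Nat.eq_of_mul_eq_mul_left two_pos ht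

end Intersecting

namespace SimpleGraph

variable {V ι : Type*}

def IsIntersectionGraphOf (G : SimpleGraph V) (supp : V → Finset ι) : Prop :=
  ∀ u v, G.Adj u v ↔ u ≠ v ∧ ¬Disjoint (supp u) (supp v)

namespace IsIntersectionGraphOf

variable {G : SimpleGraph V} {supp : V → Finset ι}

lemma adj_iff_mem_of_eq_singleton (hG : G.IsIntersectionGraphOf supp) {w u : V} {k : ι}
    (hw : supp w = {k}) (hwu : w ≠ u) : G.Adj w u ↔ k ∈ supp u := by
  rw [hG, hw, Finset.disjoint_singleton_left, not_not]
  exact and_iff_right hwu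

lemma edist_le_two [Fintype ι] (hG : G.IsIntersectionGraphOf supp) (hne : ∀ u, (supp u).Nonempty)
    {c : V} (hc : supp c = Finset.univ) (u v : V) : G.edist u v ≤ 2 :=
  edist_le_two_of_forall_adj c (fun x hx => (hG c x).mpr
    ⟨hx.symm, hc ▸ Finset.not_disjoint_iff.mpr
      ((hne x).imp fun k hk => ⟨Finset.mem_univ k, hk⟩)⟩) u v

lemma ncard_compl_le [Fintype ι] [DecidableEq ι] (hG : G.IsIntersectionGraphOf supp)
    (hne : ∀ u, (supp u).Nonempty) (h2 : ∀ x y, G.edist x y ≤ 2) {W : Set V}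
    (hW : IsStrongResolvingSet G W) :
    Wᶜ.ncard ≤ 2 ^ (Fintype.card ι - 1) := by
  rw [isStrongResolvingSet_iff_of_edist_le_two h2] at hW
  have hinj : Set.InjOn supp Wᶜ := by
    intro u hu v hv huv
    by_contra huv'
    obtain ⟨-, w, hw, hdiff⟩ := hW u hu v hv huv'
    rw [hG, hG, huv] at hdiff
    exact hdiff (by simp [ne_of_mem_of_not_mem hw hu, ne_of_mem_of_not_mem hw hv])
  have hint : (supp '' Wᶜ).Intersecting := by
    rintro _ ⟨u, hu, rfl⟩ _ ⟨v, hv, rfl⟩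
    rcases eq_or_ne u v with rfl | huv
    · exact disjoint_self.not.mpr (hne u).ne_empty
    · exact ((hG u v).mp (hW u hu v hv huv).1).2
  rw [← hinj.ncard_image]
  exact hint.ncard_le_two_pow

lemma exists_isStrongResolvingSet [Fintype ι] [DecidableEq ι] [Nonempty ι]
    (hG : G.IsIntersectionGraphOf supp)
    (hsurj : ∀ S : Finset ι, S.Nonempty → ∃ u, supp u = S)
    (h2 : ∀ x y, G.edist x y ≤ 2) :
    ∃ W : Set V, IsStrongResolvingSet G W ∧ Wᶜ.ncard = 2 ^ (Fintype.card ι - 1) := by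
  obtain ⟨t, ht, htcard⟩ := Set.exists_intersecting_ncard_eq_two_pow (ι := ι)
  have hsurjOn : Set.SurjOn supp Set.univ t := fun S hS =>
    let ⟨u, hu⟩ := hsurj S (Finset.nonempty_iff_ne_empty.mpr (ht.ne_bot hS))
    ⟨u, trivial, hu⟩
  obtain ⟨C, -, hC⟩ := hsurjOn.exists_bijOn_subset
  refine ⟨Cᶜ, ?_, by rw [compl_compl, hC.ncard_eq, htcard]⟩
  rw [isStrongResolvingSet_iff_of_edist_le_two h2]
  intro u hu v hv huv
  rw [Set.notMem_compl_iff] at hu hv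
  refine ⟨(hG u v).mpr ⟨huv, ht (hC.mapsTo hu) (hC.mapsTo hv)⟩, ?_⟩
  obtain ⟨k, hk⟩ : ∃ k, ¬(k ∈ supp u ↔ k ∈ supp v) := by
    by_contra! h
    exact huv (hC.injOn hu hv (Finset.ext h))
  obtain ⟨w, hw⟩ := hsurj {k} (Finset.singleton_nonempty k)
  have hwC : w ∉ C := by
    intro hwC
    have hkt : {k} ∈ t := hw ▸ hC.mapsTo hwC
    have hku := ht hkt (hC.mapsTo hu)
    have hkv := ht hkt (hC.mapsTo hv)
    rw [Finset.disjoint_singleton_left, not_not] at hku hkv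
    exact hk (iff_of_true hku hkv)
  refine ⟨w, hwC, ?_⟩
  rwa [hG.adj_iff_mem_of_eq_singleton hw (ne_of_mem_of_not_mem hu hwC).symm,
    hG.adj_iff_mem_of_eq_singleton hw (ne_of_mem_of_not_mem hv hwC).symm]

theorem isLeast_ncard_isStrongResolvingSet [Finite V] [Fintype ι] [DecidableEq ι] [Nonempty ι]
    (hG : G.IsIntersectionGraphOf supp) (hne : ∀ u, (supp u).Nonempty)
    (hsurj : ∀ S : Finset ι, S.Nonempty → ∃ u, supp u = S) :
    IsLeast {k | ∃ W : Set V, W.Finite ∧ IsStrongResolvingSet G W ∧ W.ncard = k}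
      (Nat.card V - 2 ^ (Fintype.card ι - 1)) := by
  obtain ⟨c, hc⟩ := hsurj Finset.univ Finset.univ_nonempty
  have h2 := hG.edist_le_two hne hc
  constructor
  · obtain ⟨W, hW, hcard⟩ := hG.exists_isStrongResolvingSet hsurj h2
    refine ⟨W, W.toFinite, hW, ?_⟩
    rw [← hcard, ← Set.ncard_add_ncard_compl W, Nat.add_sub_cancel]
  · rintro _ ⟨W, -, hW, rfl⟩
    have hle := hG.ncard_compl_le hne h2 hW
    have hsum := Set.ncard_add_ncard_compl W
    omega

end IsIntersectionGraphOf

end SimpleGraph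

section Chain

variable {R : Type*} [CommRing R]

theorem PreValuationRing.of_isLocalRing_of_isBezout [IsLocalRing R] [IsBezout R] :
    PreValuationRing R := by
  refine PreValuationRing.iff_dvd_total.mpr ⟨fun a b => ?_⟩
  obtain ⟨g, hg : Ideal.span {a, b} = Ideal.span {g}⟩ := IsBezout.span_pair_isPrincipal a b
  obtain ⟨a', rfl⟩ := Ideal.mem_span_singleton'.mp
    (show a ∈ Ideal.span {g} from hg ▸ Ideal.subset_span (by simp))
  obtain ⟨b', rfl⟩ := Ideal.mem_span_singleton'.mp
    (show b ∈ Ideal.span {g} from hg ▸ Ideal.subset_span (by simp))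
  obtain ⟨x, y, hxy⟩ := Ideal.mem_span_pair.mp
    (show g ∈ Ideal.span {a' * g, b' * g} from hg ▸ Ideal.mem_span_singleton_self g)
  -- `g = (x a' + y b') g`: either `x a' + y b'` is a unit, and then so is `a'` or `b'`,
  -- or `1 - (x a' + y b')` is a unit, and then `g = 0`.
  rcases IsLocalRing.isUnit_or_isUnit_one_sub_self (x * a' + y * b') with h | h
  · rcases IsLocalRing.isUnit_or_isUnit_of_isUnit_add h with h | h
    · exact Or.inl (mul_dvd_mul_right (isUnit_of_mul_isUnit_right h).dvd g)
    · exact Or.inr (mul_dvd_mul_right (isUnit_of_mul_isUnit_right h).dvd g)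
  · have hg0 : g = 0 := h.mul_right_eq_zero.mp (by linear_combination -hxy)
    simp [hg0]

theorem PreValuationRing.of_isField (hR : IsField R) : PreValuationRing R := by
  have := Ring.isField_iff_isSimpleOrder_ideal.mp hR
  refine PreValuationRing.iff_ideal_total.mpr ⟨fun P Q => ?_⟩
  rcases eq_bot_or_eq_top P with rfl | rfl
  · exact Or.inl bot_le
  · exact Or.inr le_top

lemma Ideal.inf_eq_bot_iff_of_preValuationRing [PreValuationRing R] {P Q : Ideal R} :
    P ⊓ Q = ⊥ ↔ P = ⊥ ∨ Q = ⊥ := by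
  refine ⟨fun h => ?_, by rintro (rfl | rfl) <;> simp⟩
  rcases (PreValuationRing.iff_ideal_total.mp ‹_›).total P Q with hPQ | hQP
  · exact Or.inl (inf_eq_left.mpr hPQ ▸ h)
  · exact Or.inr (inf_eq_right.mpr hQP ▸ h)

end Chain

section Card

variable {R : Type*} [CommRing R]

lemma finite_ideal_of_finite_nontrivial (h : {K : Ideal R | K ≠ ⊥ ∧ K ≠ ⊤}.Finite) :
    Finite (Ideal R) := by
  refine Set.finite_univ_iff.mp ((h.union (Set.toFinite {⊥, ⊤})).subset fun K _ => ?_)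
  by_cases hK : K ≠ ⊥ ∧ K ≠ ⊤
  · exact Or.inl hK
  · right
    rw [not_and_or, not_not, not_not] at hK
    simpa using hK

lemma card_nontrivialIdeal_add_two [Nontrivial R] [Finite (Ideal R)] :
    Nat.card (NontrivialIdeal R) + 2 = Nat.card (Ideal R) := by
  have hcompl : {K : Ideal R | K ≠ ⊥ ∧ K ≠ ⊤}ᶜ = {⊥, ⊤} := by
    ext K
    simp [or_iff_not_imp_left]
  have h := Set.ncard_add_ncard_compl {K : Ideal R | K ≠ ⊥ ∧ K ≠ ⊤}
  rwa [hcompl, Set.ncard_pair bot_ne_top, ← Nat.card_coe_set_eq] at h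

lemma card_ideal_of_isField (hR : IsField R) : Nat.card (Ideal R) = 2 := by
  classical
  have := Ring.isField_iff_isSimpleOrder_ideal.mp hR
  rw [Nat.card_congr IsSimpleOrder.equivBool, Nat.card_eq_fintype_card, Fintype.card_bool]

end Card

namespace Ideal

variable {ι : Type*} [Fintype ι] {A : ι → Type*} [∀ i, CommRing (A i)]

open Classical in
noncomputable def piSupport (I : Ideal (∀ i, A i)) : Finset ι :=
  {k | I.map (Pi.evalRingHom A k) ≠ ⊥}

lemma mem_piSupport {I : Ideal (∀ i, A i)} {k : ι} :
    k ∈ piSupport I ↔ I.map (Pi.evalRingHom A k) ≠ ⊥ := by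
  simp [piSupport]

lemma eq_bot_iff_forall_map_evalRingHom {I : Ideal (∀ i, A i)} :
    I = ⊥ ↔ ∀ k, I.map (Pi.evalRingHom A k) = ⊥ := by
  rw [← (piOrderIso (R := A)).injective.eq_iff, OrderIso.map_bot, funext_iff]
  rfl

lemma piSupport_eq_empty_iff {I : Ideal (∀ i, A i)} : piSupport I = ∅ ↔ I = ⊥ := by
  simp only [Finset.eq_empty_iff_forall_notMem, mem_piSupport, not_not,
    eq_bot_iff_forall_map_evalRingHom]

lemma inf_eq_bot_iff_disjoint_piSupport [∀ i, PreValuationRing (A i)]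
    {I J : Ideal (∀ i, A i)} :
    I ⊓ J = ⊥ ↔ Disjoint (piSupport I) (piSupport J) := by
  have hmap : ∀ k, (I ⊓ J).map (Pi.evalRingHom A k) =
      I.map (Pi.evalRingHom A k) ⊓ J.map (Pi.evalRingHom A k) :=
    congrFun (piOrderIso.map_inf I J)
  simp only [eq_bot_iff_forall_map_evalRingHom, hmap, inf_eq_bot_iff_of_preValuationRing,
    Finset.disjoint_left, mem_piSupport, not_not, or_iff_not_imp_left]

lemma piSupport_pi {J : ∀ i, Ideal (A i)} {k : ι} : k ∈ piSupport (pi J) ↔ J k ≠ ⊥ := by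
  rw [mem_piSupport, map_evalRingHom_pi]

lemma exists_piSupport_eq [DecidableEq ι] [∀ i, Nontrivial (A i)] {k₀ : ι}
    {M : Ideal (A k₀)} (hM : M ≠ ⊥) (hM' : M ≠ ⊤) {S : Finset ι} (hS : S.Nonempty) :
    ∃ u : NontrivialIdeal (∀ i, A i), piSupport u.1 = S := by
  set J : ∀ i, Ideal (A i) := fun k =>
    if k ∈ S then Function.update (⊤ : ∀ i, Ideal (A i)) k₀ M k else ⊥
  have hI : piSupport (pi J) = S := by
    ext k
    rw [piSupport_pi]
    by_cases hk : k ∈ S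
    · rcases eq_or_ne k k₀ with rfl | hk₀
      · simp [J, hk, hM]
      · simp [J, hk, hk₀]
    · simp [J, hk]
  refine ⟨⟨pi J, fun h => ?_, fun h => ?_⟩, hI⟩
  · rw [← piSupport_eq_empty_iff, hI] at h
    exact hS.ne_empty h
  · have h₀ := map_evalRingHom_pi (I := J) k₀
    rw [h, map_top] at h₀
    by_cases hk₀ : k₀ ∈ S <;> simp [J, hk₀] at h₀
    exact hM' h₀.symm

lemma intersectionGraph_isIntersectionGraphOf [∀ i, PreValuationRing (A i)] :
    (intersectionGraph (∀ i, A i)).IsIntersectionGraphOf fun u => piSupport u.1 := fun _ _ =>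
  and_congr_right' inf_eq_bot_iff_disjoint_piSupport.not

instance [∀ i, Finite (Ideal (A i))] : Finite (Ideal (∀ i, A i)) :=
  Finite.of_equiv _ piOrderIso.toEquiv.symm

lemma card_ideal_pi [∀ i, Finite (Ideal (A i))] :
    Nat.card (Ideal (∀ i, A i)) = ∏ i, Nat.card (Ideal (A i)) := by
  rw [Nat.card_congr piOrderIso.toEquiv, Nat.card_pi]

end Ideal

theorem isLeast_ncard_isStrongResolvingSet_intersectionGraph_pi {ι : Type*} [Fintype ι]
    [DecidableEq ι] {A : ι → Type*} [∀ i, CommRing (A i)] [∀ i, Nontrivial (A i)]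
    [∀ i, PreValuationRing (A i)] [∀ i, Finite (Ideal (A i))] {k₀ : ι} {M : Ideal (A k₀)}
    (hM : M ≠ ⊥) (hM' : M ≠ ⊤) :
    IsLeast {k | ∃ W : Set (NontrivialIdeal (∀ i, A i)), W.Finite ∧
        IsStrongResolvingSet (intersectionGraph (∀ i, A i)) W ∧ W.ncard = k}
      (Nat.card (NontrivialIdeal (∀ i, A i)) - 2 ^ (Fintype.card ι - 1)) := by
  have : Nonempty ι := ⟨k₀⟩
  exact Ideal.intersectionGraph_isIntersectionGraphOf.isLeast_ncard_isStrongResolvingSet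
    (fun u => Finset.nonempty_iff_ne_empty.mpr (Ideal.piSupport_eq_empty_iff.not.mpr u.2.1))
    (fun _ => Ideal.exists_piSupport_eq hM hM')

theorem statement18_general (m n : ℕ) (hm : 1 ≤ m)
    (A : Fin m ⊕ Fin n → Type*) [∀ k, CommRing (A k)]
    (hloc : ∀ i : Fin m, IsLocalRing (A (Sum.inl i)))
    (hpir : ∀ i : Fin m, IsPrincipalIdealRing (A (Sum.inl i)))
    (hnf : ∀ i : Fin m, ¬ IsField (A (Sum.inl i)))
    (hfield : ∀ j : Fin n, IsField (A (Sum.inr j)))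
    (nn : Fin m → ℕ)
    (hfin : ∀ i, {K : Ideal (A (Sum.inl i)) | K ≠ ⊥ ∧ K ≠ ⊤}.Finite)
    (hcard : ∀ i, {K : Ideal (A (Sum.inl i)) | K ≠ ⊥ ∧ K ≠ ⊤}.ncard = nn i) :
    IsLeast {k : ℕ | ∃ W : Set (NontrivialIdeal (∀ k, A k)), W.Finite ∧
        IsStrongResolvingSet (intersectionGraph (∀ k, A k)) W ∧ W.ncard = k}
      ((∏ i, (nn i + 2)) * 2 ^ n - 2 ^ (m + n - 1) - 2) := by
  have hnontrivial : ∀ k, Nontrivial (A k) :=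
    Sum.rec (fun i => (hloc i).toNontrivial) (fun j => (hfield j).nontrivial)
  have hchain : ∀ k, PreValuationRing (A k) := by
    rintro (i | j)
    · have := hloc i
      have := hpir i
      exact .of_isLocalRing_of_isBezout
    · exact .of_isField (hfield j)
  have hfinite : ∀ k, Finite (Ideal (A k)) := by
    rintro (i | j)
    · exact finite_ideal_of_finite_nontrivial (hfin i)
    · exact Nat.finite_of_card_ne_zero (by rw [card_ideal_of_isField (hfield j)]; norm_num)
  have hcardA : ∀ i, Nat.card (Ideal (A (.inl i))) = nn i + 2 := by
    intro i
    rw [← card_nontrivialIdeal_add_two, ← hcard i]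
    rfl
  have := Pi.nontrivial_at (f := A) (.inl ⟨0, hm⟩)
  have hcardV : Nat.card (NontrivialIdeal (∀ k, A k)) + 2 = (∏ i, (nn i + 2)) * 2 ^ n := by
    rw [card_nontrivialIdeal_add_two, Ideal.card_ideal_pi, Fintype.prod_sum_type]
    simp [hcardA, card_ideal_of_isField, hfield]
  have := hloc ⟨0, hm⟩
  have hM : IsLocalRing.maximalIdeal (A (.inl ⟨0, hm⟩)) ≠ ⊥ :=
    Ring.ne_bot_of_isMaximal_of_not_isField (IsLocalRing.maximalIdeal.isMaximal _) (hnf _)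
  convert isLeast_ncard_isStrongResolvingSet_intersectionGraph_pi hM
    (IsLocalRing.maximalIdeal.isMaximal _).ne_top using 1
  rw [Fintype.card_sum, Fintype.card_fin, Fintype.card_fin]
  omega

theorem statement18 (m n : ℕ) (hm : 1 ≤ m) (hn : 1 ≤ n)
    (A : Fin m ⊕ Fin n → Type*) [∀ k, CommRing (A k)]
    (hart : ∀ i : Fin m, IsArtinianRing (A (Sum.inl i)))
    (hloc : ∀ i : Fin m, IsLocalRing (A (Sum.inl i)))
    (hpir : ∀ i : Fin m, IsPrincipalIdealRing (A (Sum.inl i)))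
    (hnf : ∀ i : Fin m, ¬ IsField (A (Sum.inl i)))
    (hfield : ∀ j : Fin n, IsField (A (Sum.inr j)))
    (nn : Fin m → ℕ)
    (hfin : ∀ i, {K : Ideal (A (Sum.inl i)) | K ≠ ⊥ ∧ K ≠ ⊤}.Finite)
    (hcard : ∀ i, {K : Ideal (A (Sum.inl i)) | K ≠ ⊥ ∧ K ≠ ⊤}.ncard = nn i) :
    IsLeast {k : ℕ | ∃ W : Set (NontrivialIdeal (∀ k, A k)), W.Finite ∧
        IsStrongResolvingSet (intersectionGraph (∀ k, A k)) W ∧ W.ncard = k}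
      ((∏ i, (nn i + 2)) * 2 ^ n - 2 ^ (m + n - 1) - 2) :=
  statement18_general m n hm A hloc hpir hnf hfield nn hfin hcard
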